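/- arXiv:1902.10173 — 3 statements merged into one kernel-verified Lean document; each statement's English description precedes it below -/
import Mathlib

section
/- Let a < b, d ≥ 1, N ≥ 1, and Δ = (b−a)/d. Let q = (q_1, …, q_N) be a probability vector and let c_i = (c_i^1, …, c_i^d) ∈ [0,1]^d for 1 ≤ i ≤ N. For each s with 1 ≤ s ≤ d define f^s = 1/2 − (1/4) · ln( (Σ_{i=1}^N q_i · e^{−2 (c_i^s)²}) / (Σ_{i=1}^N q_i · e^{−2 (1 − c_i^s)²}) ). Then for every ω = (ω^1, …, ω^d) ∈ {0,1}^d one has exp(−(2/(b−a)) · Δ · Σ_{s=1}^d (f^s − ω^s)²) ≥ Σ_{i=1}^N q_i · exp(−(2/(b−a)) · Δ · Σ_{s=1}^d (c_i^s − ω^s)²). -/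
/-!
Since `(2 / (b - a)) · Δ = 2 / d`, the claim is a statement about the coordinate losses
`(x - ω)²` with learning rate `2` averaged with weights `1 / d`.

In one coordinate this is the `2`-mixability of the square loss: Hoeffding's lemma for a
centred Bernoulli(`p`) variable, evaluated at `t = 4 (x - p)`, says that the line with normal
`((1 - p) e^{2p²}, p e^{2(1 - p)²})` supports the curve `x ↦ (e^{-2x²}, e^{-2(1 - x)²})`
at `x = p`.
The substitution `f` is the point at which the two `q`-mixtures `A`, `B` of that curve satisfy
`A e^{2f²} = B e^{2(1 - f)²}`, so the supporting line at `f` bounds both of them at once.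

The coordinates are then combined by Hölder's inequality with `d` equal exponents, in its
exponential form: Jensen for `exp` after normalising every coordinate by its own bound.
-/

open Real ProbabilityTheory MeasureTheory Finset

lemma one_sub_mul_exp_add_mul_exp_le {p : ℝ} (hp : p ∈ Set.Icc (0 : ℝ) 1) (t : ℝ) :
    (1 - p) * exp (-p * t) + p * exp ((1 - p) * t) ≤ exp (t ^ 2 / 8) := by
  let μ : Measure ℝ := bernoulliMeasure (1 - p) (-p) ⟨p, hp⟩
  have hsupp : ∀ᵐ x ∂μ, x ∈ Set.Icc (-p) (1 - p) := by
    rw [ae_iff]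
    exact bernoulliMeasure_apply_of_notMem_of_notMem _ measurableSet_Icc.compl
      (by simp) (by simp)
  have hmean : μ[id] = 0 := by
    simp only [μ, integral_bernoulliMeasure, id_eq, smul_eq_mul]
    ring
  have hsubG := hasSubgaussianMGF_of_mem_Icc_of_integral_eq_zero aemeasurable_id hsupp hmean
  calc _ = mgf id μ t := by
        simp only [mgf, μ, integral_bernoulliMeasure, id_eq, smul_eq_mul]
        ring_nf
    _ ≤ _ := hsubG.mgf_le t
    _ = exp (t ^ 2 / 8) := by norm_num; ring_nf

lemma exp_sq_loss_supporting_line {p : ℝ} (hp : p ∈ Set.Icc (0 : ℝ) 1) (x : ℝ) :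
    (1 - p) * exp (2 * p ^ 2) * exp (-2 * x ^ 2) +
      p * exp (2 * (1 - p) ^ 2) * exp (-2 * (1 - x) ^ 2) ≤ 1 := by
  set t := 4 * (x - p)
  have e₀ : exp (2 * p ^ 2) * exp (-2 * x ^ 2) = exp (-p * t) * exp (-(t ^ 2 / 8)) := by
    rw [← exp_add, ← exp_add]; congr 1; simp only [t]; ring
  have e₁ : exp (2 * (1 - p) ^ 2) * exp (-2 * (1 - x) ^ 2) =
      exp ((1 - p) * t) * exp (-(t ^ 2 / 8)) := by
    rw [← exp_add, ← exp_add]; congr 1; simp only [t]; ring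
  calc _ = ((1 - p) * exp (-p * t) + p * exp ((1 - p) * t)) * exp (-(t ^ 2 / 8)) := by
        rw [mul_assoc, e₀, mul_assoc, e₁]; ring
    _ ≤ exp (t ^ 2 / 8) * exp (-(t ^ 2 / 8)) := by
        gcongr; exact one_sub_mul_exp_add_mul_exp_le hp t
    _ = 1 := by rw [← exp_add, add_neg_cancel, exp_zero]

lemma sum_mul_exp_sq_le_of_balanced {ι : Type*} [Fintype ι] {q c : ι → ℝ}
    (hq0 : ∀ i, 0 ≤ q i) (hq1 : ∑ i, q i ≤ 1) {p : ℝ} (hp : p ∈ Set.Icc (0 : ℝ) 1)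
    (hbal : (∑ i, q i * exp (-2 * c i ^ 2)) * exp (2 * p ^ 2) =
      (∑ i, q i * exp (-2 * (1 - c i) ^ 2)) * exp (2 * (1 - p) ^ 2)) :
    ∑ i, q i * exp (-2 * c i ^ 2) ≤ exp (-2 * p ^ 2) ∧
      ∑ i, q i * exp (-2 * (1 - c i) ^ 2) ≤ exp (-2 * (1 - p) ^ 2) := by
  set A := ∑ i, q i * exp (-2 * c i ^ 2)
  set B := ∑ i, q i * exp (-2 * (1 - c i) ^ 2)
  have hline : (1 - p) * exp (2 * p ^ 2) * A + p * exp (2 * (1 - p) ^ 2) * B ≤ 1 := calc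
    _ = ∑ i, q i * ((1 - p) * exp (2 * p ^ 2) * exp (-2 * c i ^ 2) +
          p * exp (2 * (1 - p) ^ 2) * exp (-2 * (1 - c i) ^ 2)) := by
      simp only [A, B, mul_sum, ← sum_add_distrib]
      exact sum_congr rfl fun i _ => by ring
    _ ≤ ∑ i, q i := sum_le_sum fun i _ =>
      mul_le_of_le_one_right (hq0 i) (exp_sq_loss_supporting_line hp (c i))
    _ ≤ 1 := hq1
  have hA : A * exp (2 * p ^ 2) ≤ 1 := by linear_combination hline + p * hbal
  constructor
  · rwa [← le_div_iff₀ (exp_pos _), one_div, ← exp_neg, ← neg_mul] at hA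
  · rwa [hbal, ← le_div_iff₀ (exp_pos _), one_div, ← exp_neg, ← neg_mul] at hA

lemma sum_mul_exp_pos {ι : Type*} [Fintype ι] {q : ι → ℝ} (hq0 : ∀ i, 0 ≤ q i)
    (hq : 0 < ∑ i, q i) (g : ι → ℝ) : 0 < ∑ i, q i * exp (g i) := by
  obtain ⟨i, -, hi⟩ := exists_ne_zero_of_sum_ne_zero hq.ne'
  exact sum_pos' (fun j _ => mul_nonneg (hq0 j) (exp_pos _).le)
    ⟨i, mem_univ i, mul_pos ((hq0 i).lt_of_ne' hi) (exp_pos _)⟩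

lemma one_half_sub_log_div_mem_Icc {A B : ℝ} (hA : 0 < A) (hB : 0 < B) (hAB : A ≤ exp 2 * B)
    (hBA : B ≤ exp 2 * A) : 1 / 2 - 1 / 4 * log (A / B) ∈ Set.Icc (0 : ℝ) 1 := by
  have hle : ∀ {x y : ℝ}, 0 < x → 0 < y → x ≤ exp 2 * y → log (x / y) ≤ 2 := fun hx hy hxy => by
    rw [log_le_iff_le_exp (div_pos hx hy), div_le_iff₀ hy]; linarith
  have h₁ := hle hA hB hAB
  have h₂ := hle hB hA hBA
  rw [← inv_div, log_inv] at h₂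
  constructor <;> linarith

lemma mul_exp_eq_of_eq_one_half_sub_log_div {A B p : ℝ} (hA : 0 < A) (hB : 0 < B)
    (hp : p = 1 / 2 - 1 / 4 * log (A / B)) :
    A * exp (2 * p ^ 2) = B * exp (2 * (1 - p) ^ 2) := by
  have hlog : log A + 2 * p ^ 2 = log B + 2 * (1 - p) ^ 2 := by
    rw [hp, log_div hA.ne' hB.ne']; ring
  rw [← exp_log hA, ← exp_log hB, ← exp_add, ← exp_add, hlog]

lemma sum_mul_exp_sq_sub_le_of_substitution {ι : Type*} [Fintype ι] {q c : ι → ℝ}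
    (hq0 : ∀ i, 0 ≤ q i) (hq1 : ∑ i, q i = 1) (hc : ∀ i, c i ∈ Set.Icc (0 : ℝ) 1) {p : ℝ}
    (hp : p = 1 / 2 - 1 / 4 * log ((∑ i, q i * exp (-2 * c i ^ 2)) /
      ∑ i, q i * exp (-2 * (1 - c i) ^ 2)))
    {ω : ℝ} (hω : ω = 0 ∨ ω = 1) :
    ∑ i, q i * exp (-2 * (c i - ω) ^ 2) ≤ exp (-2 * (p - ω) ^ 2) := by
  set A := ∑ i, q i * exp (-2 * c i ^ 2)
  set B := ∑ i, q i * exp (-2 * (1 - c i) ^ 2)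
  have hA : 0 < A := sum_mul_exp_pos hq0 (hq1 ▸ one_pos) _
  have hB : 0 < B := sum_mul_exp_pos hq0 (hq1 ▸ one_pos) _
  have hsum_le : ∀ {u v : ι → ℝ}, (∀ i, u i ≤ 2 + v i) →
      ∑ i, q i * exp (u i) ≤ exp 2 * ∑ i, q i * exp (v i) := fun huv => by
    rw [mul_sum]
    refine sum_le_sum fun i _ => ?_
    rw [mul_left_comm, ← exp_add]
    exact mul_le_mul_of_nonneg_left (exp_le_exp.2 (huv i)) (hq0 i)
  have hAB : A ≤ exp 2 * B := hsum_le fun i => by nlinarith [(hc i).1]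
  have hBA : B ≤ exp 2 * A := hsum_le fun i => by nlinarith [(hc i).2]
  obtain ⟨hA_le, hB_le⟩ := sum_mul_exp_sq_le_of_balanced hq0 hq1.le
    (hp ▸ one_half_sub_log_div_mem_Icc hA hB hAB hBA)
    (mul_exp_eq_of_eq_one_half_sub_log_div hA hB hp)
  rcases hω with rfl | rfl
  · simpa using hA_le
  · simp_rw [← neg_sub (1 : ℝ), neg_sq]
    exact hB_le

lemma sum_mul_exp_weighted_sum_le {ι κ : Type*} [Fintype ι] [Fintype κ] {q : ι → ℝ}
    (hq : ∀ i, 0 ≤ q i) {w : κ → ℝ} (hw0 : ∀ k, 0 ≤ w k) (hw1 : ∑ k, w k = 1)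
    {g : ι → κ → ℝ} {h : κ → ℝ} (hgh : ∀ k, ∑ i, q i * exp (g i k) ≤ exp (h k)) :
    ∑ i, q i * exp (∑ k, w k * g i k) ≤ exp (∑ k, w k * h k) := by
  have jensen : ∀ i, exp (∑ k, w k * (g i k - h k)) ≤ ∑ k, w k * exp (g i k - h k) :=
    fun i => by
    simpa using convexOn_exp.map_sum_le (t := univ) (fun k _ => hw0 k) (by simpa using hw1)
      (fun k _ => Set.mem_univ (g i k - h k))
  calc ∑ i, q i * exp (∑ k, w k * g i k)
      = (∑ i, q i * exp (∑ k, w k * (g i k - h k))) * exp (∑ k, w k * h k) := by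
        simp only [sum_mul, mul_assoc, ← exp_add, mul_sub, sum_sub_distrib, sub_add_cancel]
    _ ≤ (∑ i, q i * ∑ k, w k * exp (g i k - h k)) * exp (∑ k, w k * h k) := by
        gcongr with i
        exacts [hq i, jensen i]
    _ = (∑ k, w k * ((∑ i, q i * exp (g i k)) / exp (h k))) * exp (∑ k, w k * h k) := by
        simp only [mul_sum, sum_div, exp_sub]
        rw [sum_comm]
        congr 1
        exact sum_congr rfl fun k _ => sum_congr rfl fun i _ => by ring
    _ ≤ (∑ k, w k * 1) * exp (∑ k, w k * h k) := by
        gcongr with k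
        exacts [hw0 k, (div_le_one (exp_pos _)).2 (hgh k)]
    _ = exp (∑ k, w k * h k) := by simp [hw1]

theorem grid_square_loss_mixable_general (a b : ℝ) (hab : a < b) (d N : ℕ) (hd : 1 ≤ d)
    (q : Fin N → ℝ) (hq0 : ∀ i, 0 ≤ q i) (hq1 : ∑ i, q i = 1)
    (c : Fin N → Fin d → ℝ) (hc : ∀ i s, c i s ∈ Set.Icc (0 : ℝ) 1)
    (f : Fin d → ℝ)
    (hf : ∀ s, f s = 1 / 2 - (1 / 4) * Real.log
      ((∑ i, q i * Real.exp (-2 * (c i s) ^ 2)) /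
        (∑ i, q i * Real.exp (-2 * (1 - c i s) ^ 2)))) :
    ∀ ω : Fin d → ℝ, (∀ s, ω s = 0 ∨ ω s = 1) →
      Real.exp (-(2 / (b - a)) * (((b - a) / d) * ∑ s, (f s - ω s) ^ 2)) ≥
        ∑ i, q i * Real.exp (-(2 / (b - a)) * (((b - a) / d) * ∑ s, (c i s - ω s) ^ 2)) := by
  intro ω hω
  have hd₀ : (d : ℝ) ≠ 0 := Nat.cast_ne_zero.2 (Nat.one_le_iff_ne_zero.1 hd)
  have hscale : ∀ x : Fin d → ℝ,
      -(2 / (b - a)) * ((b - a) / d * ∑ s, x s) = ∑ s, (d : ℝ)⁻¹ * (-2 * x s) := fun x => by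
    rw [← mul_sum, ← mul_sum]
    field_simp [(sub_pos.2 hab).ne']
  simp only [hscale, ge_iff_le]
  refine sum_mul_exp_weighted_sum_le hq0 (fun _ => by positivity) ?_ fun s => ?_
  · simp [hd₀]
  · exact sum_mul_exp_sq_sub_le_of_substitution hq0 hq1 (fun i => hc i s) (hf s) (hω s)

/-- The grid loss `λ(f, ω) = Δ · Σ_s (f^s - ω^s)²` with `Δ = (b-a)/d` on vector
forecasts in `[0,1]^d` and binary outcome vectors is `2/(b-a)`-mixable, independently
of the grid size `d`, witnessed by the coordinatewise AA substitution formula. -/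
theorem grid_square_loss_mixable (a b : ℝ) (hab : a < b) (d N : ℕ) (hd : 1 ≤ d)
    (hN : 1 ≤ N)
    (q : Fin N → ℝ) (hq0 : ∀ i, 0 ≤ q i) (hq1 : ∑ i, q i = 1)
    (c : Fin N → Fin d → ℝ) (hc : ∀ i s, c i s ∈ Set.Icc (0 : ℝ) 1)
    (f : Fin d → ℝ)
    (hf : ∀ s, f s = 1 / 2 - (1 / 4) * Real.log
      ((∑ i, q i * Real.exp (-2 * (c i s) ^ 2)) /
        (∑ i, q i * Real.exp (-2 * (1 - c i s) ^ 2)))) :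
    ∀ ω : Fin d → ℝ, (∀ s, ω s = 0 ∨ ω s = 1) →
      Real.exp (-(2 / (b - a)) * (((b - a) / d) * ∑ s, (f s - ω s) ^ 2)) ≥
        ∑ i, q i * Real.exp (-(2 / (b - a)) * (((b - a) / d) * ∑ s, (c i s - ω s) ^ 2)) :=
  grid_square_loss_mixable_general a b hab d N hd q hq0 hq1 c hc f hf
end

section
/- Let a < b, let F be a distribution function on [a,b], let d ≥ 1, Δ = (b−a)/d, and z_s = a + sΔ for 0 ≤ s ≤ d. Define the piecewise-constant function L : [a,b] → ℝ by L(u) = F(z_s) for u ∈ [z_{s−1}, z_s) (1 ≤ s ≤ d) and L(b) = 1. Then for every y ∈ [a,b] one has |CRPS(F, y) − CRPS(L, y)| ≤ 2Δ. -/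
/-!
Since `F`, `L` and the Heaviside term `H` all take values in `[0, 1]`, the identity
`(F - H)² - (L - H)² = (F - L) (F + L - 2H)` bounds the CRPS difference by `2 ∫ |F - L|`.
On `[z_k, z_{k+1})` we have `F(z_k) ≤ F ≤ L = F(z_{k+1})`, so `∫ (L - F)` over that cell is at
most `Δ (F(z_{k+1}) - F(z_k))`, and these bounds telescope to `Δ (F b - F a) = Δ`.
-/

/-- A distribution function on `[a,b]`: nondecreasing on `[a,b]` with `F a = 0`, `F b = 1`. -/
def DistFunc (a b : ℝ) (F : ℝ → ℝ) : Prop :=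
  MonotoneOn F (Set.Icc a b) ∧ F a = 0 ∧ F b = 1

/-- The continuous ranked probability score
`CRPS(F, y) = ∫_a^b (F u - H(u - y))^2 du`, where `H` is the Heaviside function
(`H(u - y) = 1` iff `u ≥ y`). -/
noncomputable def CRPS (a b : ℝ) (F : ℝ → ℝ) (y : ℝ) : ℝ :=
  ∫ u in a..b, (F u - (if y ≤ u then (1 : ℝ) else 0)) ^ 2

open MeasureTheory Set

lemma DistFunc.mem_Icc {a b : ℝ} {F : ℝ → ℝ} (hF : DistFunc a b F) {u : ℝ} (hu : u ∈ Icc a b) :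
    F u ∈ Icc (0 : ℝ) 1 :=
  ⟨hF.2.1 ▸ hF.1 (left_mem_Icc.2 (hu.1.trans hu.2)) hu hu.1,
    hF.2.2 ▸ hF.1 hu (right_mem_Icc.2 (hu.1.trans hu.2)) hu.2⟩

lemma abs_sq_sub_sub_sq_sub_le {f g h : ℝ} (hf : f ∈ Icc (0 : ℝ) 1)
    (hg : g ∈ Icc (0 : ℝ) 1) (hh : h ∈ Icc (0 : ℝ) 1) :
    |(f - h) ^ 2 - (g - h) ^ 2| ≤ 2 * |f - g| := by
  have hsum : |f + g - 2 * h| ≤ 2 :=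
    abs_le.mpr ⟨by linarith [hf.1, hg.1, hh.2], by linarith [hf.2, hg.2, hh.1]⟩
  calc |(f - h) ^ 2 - (g - h) ^ 2| = |f - g| * |f + g - 2 * h| := by rw [← abs_mul]; ring_nf
    _ ≤ 2 * |f - g| := by nlinarith [abs_nonneg (f - g)]

lemma monotone_heaviside (y : ℝ) : Monotone fun u : ℝ => if y ≤ u then (1 : ℝ) else 0 := by
  intro u v huv
  dsimp only
  split_ifs with hu hv <;> first | exact le_rfl | exact absurd (hu.trans huv) hv | norm_num

lemma heaviside_mem_Icc (y u : ℝ) : (if y ≤ u then (1 : ℝ) else 0) ∈ Icc (0 : ℝ) 1 := by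
  split_ifs <;> norm_num

section CRPSBound

variable {a b : ℝ} {F G : ℝ → ℝ}

lemma intervalIntegrable_sq_sub_heaviside (hab : a ≤ b) (hF : IntervalIntegrable F volume a b)
    (hF01 : ∀ u ∈ Icc a b, F u ∈ Icc (0 : ℝ) 1) (y : ℝ) :
    IntervalIntegrable (fun u => (F u - if y ≤ u then (1 : ℝ) else 0) ^ 2) volume a b := by
  have hFH := hF.sub ((monotone_heaviside y).intervalIntegrable (a := a) (b := b))
  have hbound : ∀ u ∈ Ioc a b, ‖F u - if y ≤ u then (1 : ℝ) else 0‖ ≤ 1 := fun u hu => by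
    have hF' := hF01 u (Ioc_subset_Icc_self hu)
    have hH := heaviside_mem_Icc y u
    exact abs_le.mpr ⟨by linarith [hF'.1, hH.2], by linarith [hF'.2, hH.1]⟩
  rw [intervalIntegrable_iff_integrableOn_Ioc_of_le hab] at hFH ⊢
  simpa only [sq, IntegrableOn] using
    hFH.mul_bdd hFH.aestronglyMeasurable (ae_restrict_of_forall_mem measurableSet_Ioc hbound)

theorem abs_CRPS_sub_CRPS_le (hab : a ≤ b) (hF : IntervalIntegrable F volume a b)
    (hG : IntervalIntegrable G volume a b) (hF01 : ∀ u ∈ Icc a b, F u ∈ Icc (0 : ℝ) 1)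
    (hG01 : ∀ u ∈ Icc a b, G u ∈ Icc (0 : ℝ) 1) (y : ℝ) :
    |CRPS a b F y - CRPS a b G y| ≤ 2 * ∫ u in a..b, |F u - G u| := by
  have hFsq := intervalIntegrable_sq_sub_heaviside hab hF hF01 y
  have hGsq := intervalIntegrable_sq_sub_heaviside hab hG hG01 y
  rw [CRPS, CRPS, ← intervalIntegral.integral_sub hFsq hGsq, ← intervalIntegral.integral_const_mul]
  refine (intervalIntegral.abs_integral_le_integral_abs hab).trans <|
    intervalIntegral.integral_mono_on hab (hFsq.sub hGsq).abs ((hF.sub hG).abs.const_mul 2) ?_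
  exact fun u hu => abs_sq_sub_sub_sq_sub_le (hF01 u hu) (hG01 u hu) (heaviside_mem_Icc y u)

end CRPSBound

section Grid

variable {F L : ℝ → ℝ} {a b Δ : ℝ} {d : ℕ}

lemma add_mul_mem_Icc (hΔ : 0 ≤ Δ) (hb : a + d * Δ = b) {k : ℕ} (hk : k ≤ d) :
    a + k * Δ ∈ Icc a b := by
  subst hb
  have hk' : (k : ℝ) ≤ d := by exact_mod_cast hk
  constructor <;> nlinarith [(k.cast_nonneg : (0 : ℝ) ≤ k)]

lemma add_succ_mul_mem_Icc (hΔ : 0 ≤ Δ) (hb : a + d * Δ = b) {k : ℕ} (hk : k < d) :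
    a + (k + 1) * Δ ∈ Icc a b := by
  exact_mod_cast add_mul_mem_Icc hΔ hb hk

lemma exists_lt_mem_Ico_add_mul (hΔ : 0 < Δ) (hb : a + d * Δ = b) {u : ℝ} (hu : u ∈ Ico a b) :
    ∃ k < d, u ∈ Ico (a + k * Δ) (a + (k + 1) * Δ) := by
  subst hb
  have h0 : 0 ≤ (u - a) / Δ := div_nonneg (by linarith [hu.1]) hΔ.le
  refine ⟨⌊(u - a) / Δ⌋₊, (Nat.floor_lt h0).2 ((div_lt_iff₀ hΔ).2 (by linarith [hu.2])), ?_, ?_⟩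
  · linarith [(le_div_iff₀ hΔ).1 (Nat.floor_le h0)]
  · linarith [(div_lt_iff₀ hΔ).1 (Nat.lt_floor_add_one ((u - a) / Δ))]

theorem integral_sub_le_of_le_grid (hΔ : 0 ≤ Δ) (hb : a + d * Δ = b)
    (hF : MonotoneOn F (Icc a b)) (hLF : IntervalIntegrable (fun u => L u - F u) volume a b)
    (hL : ∀ k < d, ∀ u ∈ Ioo (a + k * Δ) (a + (k + 1) * Δ), L u ≤ F (a + (k + 1) * Δ)) :
    ∫ u in a..b, (L u - F u) ≤ Δ * (F b - F a) := by
  have hab : a ≤ b := hb ▸ le_add_of_nonneg_right (by positivity)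
  set z : ℕ → ℝ := fun k => a + k * Δ with hz
  have hz_succ : ∀ k, z (k + 1) = a + (k + 1) * Δ := fun k => by simp [hz]
  have hz_le : ∀ k, z k ≤ z (k + 1) := fun k => by rw [hz_succ]; simp only [hz]; linarith
  have hpiece : ∀ k < d, IntervalIntegrable (fun u => L u - F u) volume (z k) (z (k + 1)) :=
    fun k hk => hLF.mono_set <| by
      rw [uIcc_of_le (hz_le k), uIcc_of_le hab]
      exact Icc_subset_Icc (add_mul_mem_Icc hΔ hb hk.le).1
        (hz_succ k ▸ (add_succ_mul_mem_Icc hΔ hb hk).2)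
  have hpiece_le : ∀ k ∈ Finset.range d,
      ∫ u in z k..z (k + 1), (L u - F u) ≤ Δ * (F (z (k + 1)) - F (z k)) := by
    intro k hk
    have hk : k < d := Finset.mem_range.1 hk
    calc ∫ u in z k..z (k + 1), (L u - F u)
        ≤ ∫ _ in z k..z (k + 1), (F (z (k + 1)) - F (z k)) :=
          intervalIntegral.integral_mono_on_of_le_Ioo (hz_le k) (hpiece k hk)
            intervalIntegrable_const fun u hu => by
              have hzk := add_mul_mem_Icc hΔ hb hk.le
              have hzk1 := add_succ_mul_mem_Icc hΔ hb hk
              rw [hz_succ] at hu ⊢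
              have hu' : u ∈ Icc a b := ⟨hzk.1.trans hu.1.le, hu.2.le.trans hzk1.2⟩
              linarith [hL k hk u hu, hF hzk hu' hu.1.le]
      _ = Δ * (F (z (k + 1)) - F (z k)) := by
          rw [intervalIntegral.integral_const, smul_eq_mul, hz_succ]; simp only [hz]; ring
  have hz0 : z 0 = a := by simp [hz]
  have hzd : z d = b := hb
  calc ∫ u in a..b, (L u - F u)
      = ∑ k ∈ Finset.range d, ∫ u in z k..z (k + 1), (L u - F u) := by
        rw [intervalIntegral.sum_integral_adjacent_intervals hpiece, hz0, hzd]
    _ ≤ ∑ k ∈ Finset.range d, Δ * (F (z (k + 1)) - F (z k)) := Finset.sum_le_sum hpiece_le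
    _ = Δ * (F b - F a) := by
        rw [← Finset.mul_sum, Finset.sum_range_sub (fun k => F (z k)), hz0, hzd]

variable (hΔ : 0 < Δ) (hb : a + d * Δ = b) (hF : MonotoneOn F (Icc a b))
  (hL : ∀ k < d, ∀ u ∈ Ico (a + k * Δ) (a + (k + 1) * Δ), L u = F (a + (k + 1) * Δ))
include hΔ hb hF hL

lemma mem_Icc_of_eq_grid {u : ℝ} (hu : u ∈ Ico a b) : L u ∈ Icc (F u) (F b) := by
  obtain ⟨k, hk, hku⟩ := exists_lt_mem_Ico_add_mul hΔ hb hu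
  have hzk1 := add_succ_mul_mem_Icc hΔ.le hb hk
  rw [hL k hk u hku]
  exact ⟨hF (Ico_subset_Icc_self hu) hzk1 hku.2.le, hF hzk1 ⟨hzk1.1.trans hzk1.2, le_rfl⟩ hzk1.2⟩

lemma monotoneOn_of_eq_grid (hLb : F b ≤ L b) : MonotoneOn L (Icc a b) := by
  intro u hu w hw huw
  rcases hw.2.eq_or_lt with rfl | hwb
  · rcases hu.2.eq_or_lt with rfl | hub
    · exact le_rfl
    · exact (mem_Icc_of_eq_grid hΔ hb hF hL ⟨hu.1, hub⟩).2.trans hLb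
  obtain ⟨k, hk, hku⟩ := exists_lt_mem_Ico_add_mul hΔ hb ⟨hu.1, huw.trans_lt hwb⟩
  obtain ⟨m, hm, hmw⟩ := exists_lt_mem_Ico_add_mul hΔ hb ⟨hw.1, hwb⟩
  have hkm : (k : ℝ) < m + 1 := (mul_lt_mul_iff_left₀ hΔ).1 (by linarith [hku.1, hmw.2])
  replace hkm : k ≤ m := Nat.lt_succ_iff.1 (by exact_mod_cast hkm)
  rw [hL k hk u hku, hL m hm w hmw]
  exact hF (add_succ_mul_mem_Icc hΔ.le hb hk) (add_succ_mul_mem_Icc hΔ.le hb hm)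
    (by gcongr)

end Grid

/-- Approximating a distribution function `F` by the piecewise-constant function `L`
on the uniform grid `z_s = a + s·Δ`, `Δ = (b-a)/d` (with `L u = F z_s` on
`[z_{s-1}, z_s)` and `L b = 1`) changes the CRPS by at most `2Δ`. -/
theorem crps_piecewise_approx (a b : ℝ) (hab : a < b)
    (F : ℝ → ℝ) (hF : DistFunc a b F) (d : ℕ) (hd : 1 ≤ d)
    (L : ℝ → ℝ)
    (hL : ∀ s : ℕ, 1 ≤ s → s ≤ d →
      ∀ u ∈ Set.Ico (a + ((s : ℝ) - 1) * ((b - a) / d)) (a + (s : ℝ) * ((b - a) / d)),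
        L u = F (a + (s : ℝ) * ((b - a) / d)))
    (hLb : L b = 1) :
    ∀ y ∈ Set.Icc a b, |CRPS a b F y - CRPS a b L y| ≤ 2 * ((b - a) / d) := by
  intro y _
  set Δ := (b - a) / d
  have hΔ : 0 < Δ := div_pos (sub_pos.2 hab) (Nat.cast_pos.2 hd)
  have hb : a + d * Δ = b := by simp only [Δ]; field_simp; ring
  have hL' : ∀ k < d, ∀ u ∈ Ico (a + k * Δ) (a + (k + 1) * Δ), L u = F (a + (k + 1) * Δ) :=
    fun k hk u hu => by exact_mod_cast hL (k + 1) (by omega) hk u (by push_cast; simpa using hu)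
  have hFL : ∀ u ∈ Icc a b, L u ∈ Icc (F u) 1 := fun u hu => by
    rcases hu.2.eq_or_lt with rfl | hub
    · simp [hLb, hF.2.2]
    · exact hF.2.2 ▸ mem_Icc_of_eq_grid hΔ hb hF.1 hL' ⟨hu.1, hub⟩
  have hFint : IntervalIntegrable F volume a b :=
    MonotoneOn.intervalIntegrable (by rw [uIcc_of_le hab.le]; exact hF.1)
  have hLint : IntervalIntegrable L volume a b :=
    MonotoneOn.intervalIntegrable <| by
      rw [uIcc_of_le hab.le]; exact monotoneOn_of_eq_grid hΔ hb hF.1 hL' (hLb ▸ hF.2.2.le)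
  calc |CRPS a b F y - CRPS a b L y|
      ≤ 2 * ∫ u in a..b, |F u - L u| :=
        abs_CRPS_sub_CRPS_le hab.le hFint hLint (fun _ => hF.mem_Icc)
          (fun u hu => ⟨(hF.mem_Icc hu).1.trans (hFL u hu).1, (hFL u hu).2⟩) y
    _ = 2 * ∫ u in a..b, (L u - F u) := by
        congr 1
        refine intervalIntegral.integral_congr fun u hu => ?_
        rw [uIcc_of_le hab.le] at hu
        exact abs_sub_comm (F u) (L u) ▸ abs_of_nonneg (sub_nonneg.2 (hFL u hu).1)
    _ ≤ 2 * (Δ * (F b - F a)) := by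
        gcongr
        exact integral_sub_le_of_le_grid hΔ.le hb hF.1 (hLint.sub hFint)
          fun k hk u hu => (hL' k hk u (Ioo_subset_Ico_self hu)).le
    _ = 2 * Δ := by rw [hF.2.1, hF.2.2]; ring
end

section
/- Let a < b and N ≥ 1, let q = (q_1, …, q_N) be a probability vector, and let F_1, …, F_N be distribution functions on [a,b]. Define F : [a,b] → ℝ by F(u) = 1/2 − (1/4) · ln( (Σ_{i=1}^N q_i · e^{−2 F_i(u)²}) / (Σ_{i=1}^N q_i · e^{−2 (1 − F_i(u))²}) ). Then F is itself a distribution function on [a,b]: F is nondecreasing, F(a) = 0, F(b) = 1, and 0 ≤ F(u) ≤ 1 for all u ∈ [a,b]. -/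
/-!
Write the aggregated forecast as `1/2 - (1/4) log (A/B)` with
`A = ∑ qᵢ exp(-2 xᵢ²)` and `B = ∑ qᵢ exp(-2 (1 - xᵢ)²)`, where `xᵢ = Fᵢ(u) ∈ [0,1]`.
Raising the `xᵢ` decreases `A` and increases `B`, so the aggregate is monotone in each `xᵢ`;
at `x = 0` and `x = 1` the ratio `A/B` is `e²` and `e⁻²`, giving the values `0` and `1`.
Composing with the nondecreasing `Fᵢ` yields a distribution function, and every distribution
function on `[a,b]` takes values in `[0,1]`.
-/

/-- The substitution function of the Aggregating Algorithm for the CRPS loss. -/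
noncomputable def crpsAggregate {ι : Type*} [Fintype ι] (q x : ι → ℝ) : ℝ :=
  1 / 2 - (1 / 4) * Real.log
    ((∑ i, q i * Real.exp (-2 * x i ^ 2)) / ∑ i, q i * Real.exp (-2 * (1 - x i) ^ 2))

section WeightedExpSum

variable {ι : Type*} [Fintype ι] {q : ι → ℝ}

lemma sum_mul_exp_const (hq1 : ∑ i, q i = 1) (c : ℝ) :
    ∑ i, q i * Real.exp c = Real.exp c := by
  rw [← Finset.sum_mul, hq1, one_mul]

lemma sum_mul_exp_pos_s7 (hq0 : ∀ i, 0 ≤ q i) (hq1 : ∑ i, q i = 1) (y : ι → ℝ) :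
    0 < ∑ i, q i * Real.exp (y i) := by
  obtain ⟨j, -, hj⟩ := Finset.exists_ne_zero_of_sum_ne_zero (hq1 ▸ one_ne_zero)
  exact Finset.sum_pos' (fun i _ => mul_nonneg (hq0 i) (Real.exp_pos _).le)
    ⟨j, Finset.mem_univ j, mul_pos ((hq0 j).lt_of_ne' hj) (Real.exp_pos _)⟩

lemma sum_mul_exp_le_sum_mul_exp (hq0 : ∀ i, 0 ≤ q i) {y z : ι → ℝ} (h : y ≤ z) :
    ∑ i, q i * Real.exp (y i) ≤ ∑ i, q i * Real.exp (z i) :=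
  Finset.sum_le_sum fun i _ => mul_le_mul_of_nonneg_left (Real.exp_le_exp.2 (h i)) (hq0 i)

end WeightedExpSum

section CrpsAggregate

variable {ι : Type*} [Fintype ι] {q : ι → ℝ}

lemma crpsAggregate_monotoneOn (hq0 : ∀ i, 0 ≤ q i) (hq1 : ∑ i, q i = 1) :
    MonotoneOn (crpsAggregate q) (Set.Icc 0 1) := by
  intro x hx y hy hxy
  have hA : ∑ i, q i * Real.exp (-2 * y i ^ 2) ≤ ∑ i, q i * Real.exp (-2 * x i ^ 2) :=
    sum_mul_exp_le_sum_mul_exp hq0 fun i => by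
      nlinarith [show (0 : ℝ) ≤ x i from hx.1 i, show x i ≤ y i from hxy i]
  have hB :
      ∑ i, q i * Real.exp (-2 * (1 - x i) ^ 2) ≤ ∑ i, q i * Real.exp (-2 * (1 - y i) ^ 2) :=
    sum_mul_exp_le_sum_mul_exp hq0 fun i => by
      nlinarith [show y i ≤ 1 from hy.2 i, show x i ≤ y i from hxy i]
  have hratio := div_le_div₀ (sum_mul_exp_pos_s7 hq0 hq1 _).le hA (sum_mul_exp_pos_s7 hq0 hq1 _) hB
  have hlog := Real.log_le_log
    (div_pos (sum_mul_exp_pos_s7 hq0 hq1 _) (sum_mul_exp_pos_s7 hq0 hq1 _)) hratio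
  unfold crpsAggregate
  linarith

lemma crpsAggregate_zero (hq1 : ∑ i, q i = 1) : crpsAggregate q 0 = 0 := by
  have hA : ∑ i, q i * Real.exp (-2 * (0 : ι → ℝ) i ^ 2) = Real.exp 0 := by
    simpa using sum_mul_exp_const hq1 0
  have hB : ∑ i, q i * Real.exp (-2 * (1 - (0 : ι → ℝ) i) ^ 2) = Real.exp (-2) := by
    simpa using sum_mul_exp_const hq1 (-2)
  rw [crpsAggregate, hA, hB, ← Real.exp_sub, Real.log_exp]
  norm_num

lemma crpsAggregate_one (hq1 : ∑ i, q i = 1) : crpsAggregate q 1 = 1 := by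
  have hA : ∑ i, q i * Real.exp (-2 * (1 : ι → ℝ) i ^ 2) = Real.exp (-2) := by
    simpa using sum_mul_exp_const hq1 (-2)
  have hB : ∑ i, q i * Real.exp (-2 * (1 - (1 : ι → ℝ) i) ^ 2) = Real.exp 0 := by
    simpa using sum_mul_exp_const hq1 0
  rw [crpsAggregate, hA, hB, ← Real.exp_sub, Real.log_exp]
  norm_num

end CrpsAggregate

namespace DistFunc

variable {a b : ℝ} {F : ℝ → ℝ}

lemma mem_Icc_s7 (hF : DistFunc a b F) {u : ℝ} (hu : u ∈ Set.Icc a b) : F u ∈ Set.Icc 0 1 := by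
  obtain ⟨hmono, ha, hb⟩ := hF
  have hab : a ≤ b := hu.1.trans hu.2
  exact ⟨ha ▸ hmono (Set.left_mem_Icc.2 hab) hu hu.1,
    hb ▸ hmono hu (Set.right_mem_Icc.2 hab) hu.2⟩

lemma congr (hF : DistFunc a b F) (hab : a ≤ b) {G : ℝ → ℝ} (h : Set.EqOn F G (Set.Icc a b)) :
    DistFunc a b G :=
  ⟨hF.1.congr h, h (Set.left_mem_Icc.2 hab) ▸ hF.2.1, h (Set.right_mem_Icc.2 hab) ▸ hF.2.2⟩

lemma comp_pi {ι : Type*} {Fi : ι → ℝ → ℝ} (hFi : ∀ i, DistFunc a b (Fi i))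
    {G : (ι → ℝ) → ℝ} (hG : MonotoneOn G (Set.Icc 0 1)) (hG0 : G 0 = 0) (hG1 : G 1 = 1) :
    DistFunc a b fun u => G fun i => Fi i u := by
  have hmem : ∀ u ∈ Set.Icc a b, (fun i => Fi i u) ∈ Set.Icc 0 1 := fun u hu =>
    ⟨fun i => ((hFi i).mem_Icc_s7 hu).1, fun i => ((hFi i).mem_Icc_s7 hu).2⟩
  refine ⟨fun u hu v hv huv => hG (hmem u hu) (hmem v hv) fun i => (hFi i).1 hu hv huv, ?_, ?_⟩
  · simp only [(hFi _).2.1]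
    exact hG0
  · simp only [(hFi _).2.2]
    exact hG1

end DistFunc

theorem aggregated_is_distribution_general (a b : ℝ) (hab : a < b) (N : ℕ)
    (q : Fin N → ℝ) (hq0 : ∀ i, 0 ≤ q i) (hq1 : ∑ i, q i = 1)
    (Fi : Fin N → ℝ → ℝ) (hFi : ∀ i, DistFunc a b (Fi i))
    (F : ℝ → ℝ)
    (hF : ∀ u ∈ Set.Icc a b, F u = 1 / 2 - (1 / 4) * Real.log
      ((∑ i, q i * Real.exp (-2 * (Fi i u) ^ 2)) /
        (∑ i, q i * Real.exp (-2 * (1 - Fi i u) ^ 2)))) :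
    DistFunc a b F ∧ ∀ u ∈ Set.Icc a b, F u ∈ Set.Icc (0 : ℝ) 1 := by
  have hagg : DistFunc a b fun u => crpsAggregate q fun i => Fi i u :=
    DistFunc.comp_pi hFi (crpsAggregate_monotoneOn hq0 hq1) (crpsAggregate_zero hq1)
      (crpsAggregate_one hq1)
  have hdist : DistFunc a b F := hagg.congr hab.le fun u hu => (hF u hu).symm
  exact ⟨hdist, fun u hu => hdist.mem_Icc_s7 hu⟩

/-- The AA aggregation rule for CRPS maps distribution functions to a distribution
function: the aggregated forecast `F` is nondecreasing, `F a = 0`, `F b = 1`, and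
takes values in `[0,1]`. -/
theorem aggregated_is_distribution (a b : ℝ) (hab : a < b) (N : ℕ) (hN : 1 ≤ N)
    (q : Fin N → ℝ) (hq0 : ∀ i, 0 ≤ q i) (hq1 : ∑ i, q i = 1)
    (Fi : Fin N → ℝ → ℝ) (hFi : ∀ i, DistFunc a b (Fi i))
    (F : ℝ → ℝ)
    (hF : ∀ u ∈ Set.Icc a b, F u = 1 / 2 - (1 / 4) * Real.log
      ((∑ i, q i * Real.exp (-2 * (Fi i u) ^ 2)) /
        (∑ i, q i * Real.exp (-2 * (1 - Fi i u) ^ 2)))) :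
    DistFunc a b F ∧ ∀ u ∈ Set.Icc a b, F u ∈ Set.Icc (0 : ℝ) 1 :=
  aggregated_is_distribution_general a b hab N q hq0 hq1 Fi hFi F hF
end
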